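/- Let a, n, A satisfy the hypotheses of Theorem 3.1 and let f(X) = X^a(X-A)^{n-a} + A. Let p be a prime not dividing n·A^-·A^+ such that v_p(f^{∘k}((a/n)A)) is positive and odd. Then modulo p, f^{∘k}(X) factors as g(X)·(X - (a/n)A)^2 where g is separable and coprime to (X - (a/n)A)^2; i.e., (a/n)A mod p is the unique multiple root of f^{∘k} mod p and it has multiplicity exactly 2. -/

import Mathlib

/-!
Put `α = A mod p` and `c = aα/n`. Over any field in which `n ≠ 0`,
`f' = n X^(a-1) (X - α)^(n-a-1) (X - c)`, and by the chain rule
`(f^{∘k})'(r) = ∏_{i<k} f'(f^{∘i}(r))`. Since `f(0) = α` and `α ≠ 0` is a fixed point, the orbit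
of a root `r` of `f^{∘k}` meets neither `0` nor `α` before time `k`; so `r` can be a multiple root
only if `f^{∘i}(r) = c` for some `i < k`, and once `f^{∘k}(c) = 0` this forces `i = 0`, i.e.
`r = c`. The same product shows that `c` is a simple root of `(f^{∘k})'`, hence a double root of
`f^{∘k}`. Positivity of `v_p(f^{∘k}(aA/n))` says precisely that `f^{∘k}(c) = 0` in `𝔽_p`, which is
seen by reducing through `ℤ_p`.
-/

open Polynomial

/-- For `q = q⁺/q⁻` in lowest terms with `q⁺ > 0`, `ratDenSigned q = q⁻` is the signed
denominator (the sign of `q` is carried by the denominator). -/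
def ratDenSigned (q : ℚ) : ℤ := q.num.sign * q.den

/-- `polyIter f k` is the `k`-th compositional iterate `f^{∘k}` of the polynomial `f`. -/
noncomputable def polyIter {R : Type*} [CommSemiring R] (f : Polynomial R) : ℕ → Polynomial R
  | 0 => Polynomial.X
  | k + 1 => (polyIter f k).comp f

namespace Function

variable {M : Type*} {φ : M → M} {x : M} {i k : ℕ}

theorem IsFixedPt.iterate_apply_ne {α : M} (hα : IsFixedPt φ α) (hx : φ^[k] x ≠ α)
    (hi : i ≤ k) : φ^[i] x ≠ α := by
  intro h
  apply hx
  rw [← Nat.sub_add_cancel hi, iterate_add_apply, h, (hα.iterate _).eq]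

theorem IsFixedPt.iterate_apply_ne_of_apply_eq {z α : M} (hα : IsFixedPt φ α) (hz : φ z = α)
    (hzα : z ≠ α) (hx : φ^[k] x = z) (hi : i < k) : φ^[i] x ≠ z := by
  intro h
  refine hα.iterate_apply_ne (hx ▸ hzα) hi ?_
  rw [iterate_succ_apply', h, hz]

theorem eq_zero_of_iterate_apply_eq_of_forall_lt_ne {z c : M} (hc : ∀ j < k, φ^[j] c ≠ z)
    (hx : φ^[k] x = z) (hi : i ≤ k) (hxc : φ^[i] x = c) : i = 0 := by
  by_contra h
  exact hc (k - i) (by omega) (by rw [← hxc, ← iterate_add_apply, Nat.sub_add_cancel hi, hx])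

end Function

section PolyIter

variable {R S : Type*} [CommSemiring R] [CommSemiring S]

theorem eval_polyIter (f : R[X]) (k : ℕ) (x : R) :
    (polyIter f k).eval x = (fun y => f.eval y)^[k] x := by
  induction k generalizing x with
  | zero => simp [polyIter]
  | succ k ih => rw [polyIter, eval_comp, ih, Function.iterate_succ_apply]

theorem map_polyIter (σ : R →+* S) (f : R[X]) (k : ℕ) :
    (polyIter f k).map σ = polyIter (f.map σ) k := by
  induction k with
  | zero => simp [polyIter]
  | succ k ih => rw [polyIter, polyIter, map_comp, ih]

theorem hom_eval_polyIter (σ : R →+* S) (f : R[X]) (k : ℕ) (x : R) :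
    σ ((polyIter f k).eval x) = (polyIter (f.map σ) k).eval (σ x) := by
  rw [← map_polyIter, eval_map, eval₂_at_apply]

theorem eval_derivative_polyIter (f : R[X]) (k : ℕ) (x : R) :
    (derivative (polyIter f k)).eval x =
      ∏ i ∈ Finset.range k, (derivative f).eval ((fun y => f.eval y)^[i] x) := by
  induction k generalizing x with
  | zero => simp [polyIter]
  | succ k ih =>
    rw [polyIter, derivative_comp, eval_mul, eval_comp, ih, Finset.prod_range_succ', mul_comm]
    simp only [Function.iterate_succ_apply, Function.iterate_zero_apply]

end PolyIter

theorem exists_eq_mul_X_sub_C_sq_of_derivative_eq {R : Type*} [CommRing R] [IsDomain R]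
    {F w : R[X]} {c : R} (hF : F.IsRoot c) (hF' : derivative F = w * (X - C c))
    (hw : w.eval c ≠ 0) : ∃ g : R[X], F = g * (X - C c) ^ 2 ∧ g.eval c ≠ 0 := by
  obtain ⟨h, rfl⟩ := dvd_iff_isRoot.2 hF
  have hh : h.IsRoot c := by
    have := congrArg (eval c) hF'
    simpa [derivative_mul] using this
  obtain ⟨g, rfl⟩ := dvd_iff_isRoot.2 hh
  refine ⟨g, by ring, fun hg => hw ?_⟩
  have hw' : w = 2 * g + (X - C c) * derivative g := by
    apply mul_right_cancel₀ (X_sub_C_ne_zero c)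
    rw [← hF']
    simp only [derivative_mul, derivative_sub, derivative_X, derivative_C]
    ring
  simp [hw', hg]

noncomputable def fPoly {R : Type*} [CommRing R] (a n : ℕ) (α : R) : R[X] :=
  X ^ a * (X - C α) ^ (n - a) + C α

section fPoly

variable {R S : Type*} [CommRing R] [CommRing S] {a n : ℕ}

theorem map_fPoly (σ : R →+* S) (α : R) : (fPoly a n α).map σ = fPoly a n (σ α) := by
  simp [fPoly]

theorem eval_fPoly (α x : R) : (fPoly a n α).eval x = x ^ a * (x - α) ^ (n - a) + α := by
  simp [fPoly]

theorem eval_fPoly_zero (h0 : 0 < a) (α : R) : (fPoly a n α).eval 0 = α := by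
  simp [eval_fPoly, zero_pow h0.ne']

theorem isFixedPt_eval_fPoly (han : a < n) (α : R) :
    Function.IsFixedPt (fun x => (fPoly a n α).eval x) α := by
  simp [Function.IsFixedPt, eval_fPoly, zero_pow (Nat.sub_ne_zero_of_lt han)]

theorem iterate_eval_fPoly_ne (h0 : 0 < a) (han : a < n) {α r : R} (hα : α ≠ 0) {k : ℕ}
    (hr : (fun x => (fPoly a n α).eval x)^[k] r = 0) {i : ℕ} (hi : i < k) :
    (fun x => (fPoly a n α).eval x)^[i] r ≠ 0 ∧ (fun x => (fPoly a n α).eval x)^[i] r ≠ α :=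
  have hfix := isFixedPt_eval_fPoly han α
  ⟨hfix.iterate_apply_ne_of_apply_eq (eval_fPoly_zero h0 α) hα.symm hr hi,
    hfix.iterate_apply_ne (hr ▸ hα.symm) hi.le⟩

variable {E : Type*} [Field E] {α : E}

theorem derivative_fPoly (h0 : 0 < a) (han : a < n) (hn : (n : E) ≠ 0) :
    derivative (fPoly a n α) =
      C (n : E) * X ^ (a - 1) * (X - C α) ^ (n - a - 1) * (X - C (a * α / n)) := by
  obtain ⟨a, rfl⟩ : ∃ a', a = a' + 1 := ⟨a - 1, by omega⟩
  obtain ⟨m, hm⟩ : ∃ m, n - (a + 1) = m + 1 := ⟨n - a - 2, by omega⟩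
  have hCn : C (n : E) = C ((a + 1 : ℕ) : E) + C ((m + 1 : ℕ) : E) := by
    rw [← C_add, ← Nat.cast_add]; congr 2; omega
  have hc : C (n : E) * C ((a + 1 : ℕ) * α / n) = C ((a + 1 : ℕ) : E) * C α := by
    rw [← C_mul, ← C_mul]; congr 1; field_simp
  simp only [fPoly, hm, derivative_add, derivative_mul, derivative_X, derivative_pow,
    derivative_X_sub_C, derivative_C, Nat.add_sub_cancel, add_zero, mul_one]
  linear_combination (X ^ a * (X - C α) ^ m) * hc - (X ^ (a + 1) * (X - C α) ^ m) * hCn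

theorem eq_or_eq_of_eval_derivative_fPoly_eq_zero (h0 : 0 < a) (han : a < n)
    (hn : (n : E) ≠ 0) {y : E} (hy : (derivative (fPoly a n α)).eval y = 0) :
    y = 0 ∨ y = α ∨ y = a * α / n := by
  simp only [derivative_fPoly h0 han hn, eval_mul, eval_C, eval_pow, eval_X, eval_sub,
    mul_eq_zero, hn, false_or, pow_eq_zero_iff', sub_eq_zero] at hy
  tauto

end fPoly

section Iterate

variable {E : Type*} [Field E] {a n k : ℕ} {α : E}

local notation "φ" => fun x => Polynomial.eval x (fPoly a n α)

theorem eq_of_eval_derivative_fPoly_iterate_eq_zero (h0 : 0 < a) (han : a < n)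
    (hn : (n : E) ≠ 0) (hα : α ≠ 0) (hc : φ^[k] (a * α / n) = 0) {r : E}
    (hr : φ^[k] r = 0) {i : ℕ} (hi : i < k)
    (h : (derivative (fPoly a n α)).eval (φ^[i] r) = 0) : i = 0 ∧ r = a * α / n := by
  rcases eq_or_eq_of_eval_derivative_fPoly_eq_zero h0 han hn h with h | h | h
  · exact absurd h (iterate_eval_fPoly_ne h0 han hα hr hi).1
  · exact absurd h (iterate_eval_fPoly_ne h0 han hα hr hi).2
  · obtain rfl := Function.eq_zero_of_iterate_apply_eq_of_forall_lt_ne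
      (fun j hj => (iterate_eval_fPoly_ne h0 han hα hc hj).1) hr hi.le h
    exact ⟨rfl, h⟩

theorem eq_of_isRoot_polyIter_fPoly_of_isRoot_derivative (h0 : 0 < a) (han : a < n)
    (hn : (n : E) ≠ 0) (hα : α ≠ 0) (hc : (polyIter (fPoly a n α) k).IsRoot (a * α / n)) {r : E}
    (hr : (polyIter (fPoly a n α) k).IsRoot r)
    (hr' : (derivative (polyIter (fPoly a n α) k)).IsRoot r) : r = a * α / n := by
  rw [IsRoot, eval_polyIter] at hc hr
  rw [IsRoot, eval_derivative_polyIter, Finset.prod_eq_zero_iff] at hr'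
  obtain ⟨i, hi, hi0⟩ := hr'
  exact (eq_of_eval_derivative_fPoly_iterate_eq_zero h0 han hn hα hc hr
    (Finset.mem_range.1 hi) hi0).2

theorem exists_polyIter_fPoly_eq_mul_sq (h0 : 0 < a) (han : a < n) (hn : (n : E) ≠ 0)
    (hα : α ≠ 0) (hk : 0 < k)
    (hc : (polyIter (fPoly a n α) k).IsRoot (a * α / n)) :
    ∃ g : E[X], polyIter (fPoly a n α) k = g * (X - C (a * α / n)) ^ 2 ∧
      g.eval (a * α / n) ≠ 0 := by
  obtain ⟨k, rfl⟩ : ∃ k', k = k' + 1 := ⟨k - 1, by omega⟩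
  set c : E := a * α / n
  refine exists_eq_mul_X_sub_C_sq_of_derivative_eq hc
    (w := C (n : E) * X ^ (a - 1) * (X - C α) ^ (n - a - 1) *
      (derivative (polyIter (fPoly a n α) k)).comp (fPoly a n α))
    (by rw [polyIter, derivative_comp, derivative_fPoly h0 han hn]; ring) ?_
  have hc' : φ^[k + 1] c = 0 := by rwa [IsRoot, eval_polyIter] at hc
  obtain ⟨hc0, hcα⟩ := iterate_eval_fPoly_ne h0 han hα hc' k.succ_pos
  simp only [eval_mul, eval_C, eval_pow, eval_X, eval_sub, eval_comp, eval_derivative_polyIter]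
  refine mul_ne_zero (mul_ne_zero (mul_ne_zero hn (pow_ne_zero _ hc0))
    (pow_ne_zero _ (sub_ne_zero.2 hcα))) ?_
  refine Finset.prod_ne_zero_iff.2 fun i hi h => ?_
  rw [← Function.iterate_succ_apply] at h
  exact i.succ_ne_zero (eq_of_eval_derivative_fPoly_iterate_eq_zero h0 han hn hα hc' hc'
    (Nat.succ_lt_succ (Finset.mem_range.1 hi)) h).1

end Iterate

theorem separable_of_eq_mul_X_sub_C_sq {K L : Type*} [Field K] [Field L] [IsAlgClosed L]
    [Algebra K L] {F g : K[X]} {c : K} (hF : F = g * (X - C c) ^ 2) (hgc : g.eval c ≠ 0)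
    (hroot : ∀ r : L, (F.map (algebraMap K L)).IsRoot r →
      (derivative (F.map (algebraMap K L))).IsRoot r → r = algebraMap K L c) :
    g.Separable := by
  rw [Separable, isCoprime_iff_aeval_ne_zero_of_isAlgClosed K L]
  intro r
  by_contra! ⟨hg, hg'⟩
  rw [← eval_map_algebraMap] at hg hg'
  have hrc := hroot r (by simp [hF, hg]) (by simp [hF, derivative_map, hg, hg'])
  rw [hrc, eval_map_algebraMap, aeval_algebraMap_apply] at hg
  exact hgc ((algebraMap K L).injective (hg.trans (map_zero _).symm))

theorem exists_polyIter_fPoly_eq_mul_sq_separable {K : Type*} [Field K] {a n k : ℕ} {α : K}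
    (h0 : 0 < a) (han : a < n) (hn : (n : K) ≠ 0) (hα : α ≠ 0) (hk : 0 < k)
    (hc : (polyIter (fPoly a n α) k).IsRoot (a * α / n)) :
    ∃ g : K[X], polyIter (fPoly a n α) k = g * (X - C (a * α / n)) ^ 2 ∧ g.Separable ∧
      IsCoprime g ((X - C (a * α / n)) ^ 2) := by
  obtain ⟨g, hF, hgc⟩ := exists_polyIter_fPoly_eq_mul_sq h0 han hn hα hk hc
  refine ⟨g, hF, separable_of_eq_mul_X_sub_C_sq (L := AlgebraicClosure K) hF hgc ?_,
    ((irreducible_X_sub_C _).coprime_iff_not_dvd.2 (mt dvd_iff_isRoot.1 hgc)).symm.pow_right⟩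
  intro r hr hr'
  have hcL := hc.map (f := algebraMap K (AlgebraicClosure K))
  simp only [map_polyIter, map_fPoly, map_div₀, map_mul, map_natCast] at hr hr' hcL ⊢
  exact eq_of_isRoot_polyIter_fPoly_of_isRoot_derivative h0 han
    (by rwa [← map_natCast (algebraMap K _), _root_.map_ne_zero]) ((_root_.map_ne_zero _).2 hα)
    hcL hr hr'

section Padic

variable {p : ℕ} [hp : Fact p.Prime]

theorem Padic.norm_ratCast_lt_one_of_padicValRat_pos {q : ℚ} (hq : 0 < padicValRat p q) :
    ‖(q : ℚ_[p])‖ < 1 := by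
  have hq0 : q ≠ 0 := by rintro rfl; simp at hq
  rw [Padic.eq_padicNorm, padicNorm.eq_zpow_of_nonzero hq0]
  exact_mod_cast zpow_lt_one_of_neg₀ (by exact_mod_cast hp.1.one_lt : (1 : ℚ) < p)
    (neg_lt_zero.2 hq)

theorem PadicInt.toZMod_eq_zero_of_norm_lt_one {x : ℤ_[p]} (hx : ‖x‖ < 1) : toZMod x = 0 := by
  rw [← RingHom.mem_ker, ker_toZMod, IsLocalRing.mem_maximalIdeal]
  exact mem_nonunits.2 hx

theorem PadicInt.exists_coe_eq_and_toZMod_eq {x : ℚ_[p]} {m d : ℤ} (hd : ¬ (p : ℤ) ∣ d)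
    (h : x * d = m) : ∃ y : ℤ_[p], (y : ℚ_[p]) = x ∧ toZMod y = m / d := by
  have hd1 : ‖(d : ℚ_[p])‖ = 1 :=
    le_antisymm (Padic.norm_int_le_one d) (not_lt.1 (mt Padic.norm_intCast_lt_one_iff.1 hd))
  have hx : ‖x‖ ≤ 1 := by
    simpa [hd1] using (congrArg norm h).le.trans (Padic.norm_int_le_one m)
  let y : ℤ_[p] := ⟨x, hx⟩
  refine ⟨y, rfl, ?_⟩
  have hyd : y * d = m := PadicInt.ext (by simpa using h)
  rw [eq_div_iff (by rwa [Ne, ZMod.intCast_zmod_eq_zero_iff_dvd])]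
  simpa using congrArg toZMod hyd

end Padic

theorem isRoot_polyIter_fPoly_zmod_of_padicValRat_pos {p : ℕ} [hp : Fact p.Prime] {a n k : ℕ}
    {A : ℚ} (hpn : ¬ (p : ℤ) ∣ n) (hpden : ¬ (p : ℤ) ∣ A.den)
    (hpos : 0 < padicValRat p ((polyIter (fPoly a n A) k).eval (a * A / n))) :
    (polyIter (fPoly a n ((A.num : ZMod p) / A.den)) k).IsRoot
      (a * ((A.num : ZMod p) / A.den) / n) := by
  obtain ⟨Az, hAz, hAzα⟩ := PadicInt.exists_coe_eq_and_toZMod_eq (x := (A : ℚ_[p])) hpden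
    (by exact_mod_cast Rat.mul_den_eq_num A)
  have hcA : ((a * A / n : ℚ) : ℚ_[p]) * (n * A.den : ℤ) = (a * A.num : ℤ) := by
    have hn : (n : ℚ) ≠ 0 := Nat.cast_ne_zero.2 (by rintro rfl; simp at hpn)
    have hq : (a * A / n : ℚ) * ((n * A.den : ℤ) : ℚ) = ((a * A.num : ℤ) : ℚ) := by
      push_cast
      rw [← Rat.mul_den_eq_num]
      field_simp
    exact_mod_cast congrArg (Rat.cast : ℚ → ℚ_[p]) hq
  obtain ⟨cz, hcz, hczc⟩ := PadicInt.exists_coe_eq_and_toZMod_eq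
    ((Nat.prime_iff_prime_int.mp hp.out).not_dvd_mul hpn hpden) hcA
  have hnorm : ‖(polyIter (fPoly a n Az) k).eval cz‖ < 1 := by
    have hlift := hom_eval_polyIter PadicInt.Coe.ringHom (fPoly a n Az) k cz
    have hcast := hom_eval_polyIter (Rat.castHom ℚ_[p]) (fPoly a n A) k (a * A / n)
    rw [map_fPoly] at hlift
    change ((_ : ℤ_[p]) : ℚ_[p]) = eval (cz : ℚ_[p]) (polyIter (fPoly a n (Az : ℚ_[p])) k)
      at hlift
    simp only [map_fPoly, eq_ratCast] at hcast
    rw [PadicInt.norm_def, hlift, hAz, hcz, ← hcast]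
    exact Padic.norm_ratCast_lt_one_of_padicValRat_pos hpos
  have hczc' : PadicInt.toZMod cz = a * ((A.num : ZMod p) / A.den) / n := by
    rw [hczc]
    push_cast
    ring
  have hroot := PadicInt.toZMod_eq_zero_of_norm_lt_one hnorm
  rwa [hom_eval_polyIter, map_fPoly, hAzα, hczc', Int.cast_natCast] at hroot

theorem iterate_mod_p_has_unique_double_root_general
    (a n : ℕ) (h0 : 0 < a) (han : a < n)
    (A : ℚ)
    (p : ℕ) [hp : Fact p.Prime] (k : ℕ) (hk : 0 < k)
    (hpdvd : ¬ (p : ℤ) ∣ ((n : ℤ) * ratDenSigned A * |A.num|))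
    (hpos : 0 < padicValRat p ((fun x : ℚ => x ^ a * (x - A) ^ (n - a) + A)^[k] ((a : ℚ) * A / n))) :
    ∃ g : Polynomial (ZMod p),
      polyIter (X ^ a * (X - C ((A.num : ZMod p) / (A.den : ZMod p))) ^ (n - a)
          + C ((A.num : ZMod p) / (A.den : ZMod p))) k
        = g * (X - C ((a : ZMod p) * ((A.num : ZMod p) / (A.den : ZMod p)) / (n : ZMod p))) ^ 2 ∧
      g.Separable ∧
      IsCoprime g ((X - C ((a : ZMod p) * ((A.num : ZMod p) / (A.den : ZMod p)) / (n : ZMod p))) ^ 2) := by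
  have hpn : ¬ (p : ℤ) ∣ n := fun h => hpdvd ((h.mul_right _).mul_right _)
  have hpden : ¬ (p : ℤ) ∣ A.den := fun h =>
    hpdvd (((h.mul_left A.num.sign).mul_left _).mul_right _)
  have hpnum : ¬ (p : ℤ) ∣ A.num := fun h => hpdvd (((dvd_abs _ _).2 h).mul_left _)
  have hnK : (n : ZMod p) ≠ 0 := by
    rwa [← Int.cast_natCast, Ne, ZMod.intCast_zmod_eq_zero_iff_dvd]
  have hαK : (A.num : ZMod p) / (A.den : ZMod p) ≠ 0 := by
    refine div_ne_zero ?_ ?_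
    · rwa [Ne, ZMod.intCast_zmod_eq_zero_iff_dvd]
    · rwa [← Int.cast_natCast, Ne, ZMod.intCast_zmod_eq_zero_iff_dvd]
  simp only [← eval_fPoly, ← eval_polyIter] at hpos
  exact exists_polyIter_fPoly_eq_mul_sq_separable h0 han hnK hαK hk
    (isRoot_polyIter_fPoly_zmod_of_padicValRat_pos hpn hpden hpos)

/-- Claim (1) of Lemma 3.6: under the hypotheses of Theorem 3.1, if `p` is a prime not
dividing `n·A⁻·A⁺` such that `v_p(f^{∘k}((a/n)A))` is positive and odd, then modulo `p`
the iterate `f^{∘k}` factors as `g(X)·(X - (a/n)A)²` with `g` separable and coprime to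
`(X - (a/n)A)²`; i.e. `(a/n)A mod p` is the unique multiple root and has multiplicity 2. -/
theorem iterate_mod_p_has_unique_double_root
    (a n : ℕ) (h0 : 0 < a) (han : a < n)
    (ha1 : n ≤ 6 → a = 1) (ha2 : n % 8 = 7 → a = 1)
    (ha3 : 6 < n → n % 8 ≠ 7 → Nat.Prime (n - a) ∧ 2 * a < n)
    (A : ℚ)
    (hA2 : ∃ p₀ : ℕ, p₀.Prime ∧ ¬ p₀ ∣ n ∧ padicValRat p₀ A = 1)
    (hA3 : (2 : ℝ) ^ ((1 : ℝ) / (n - 1)) * ((a : ℝ) / n) ^ (-(a : ℝ) / (n - 1)) *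
        |(a : ℝ) / n - 1| ^ (-((n : ℝ) - a) / (n - 1)) < (A : ℝ) ∧
        (1 : ℝ) < (2 : ℝ) ^ ((1 : ℝ) / (n - 1)) * ((a : ℝ) / n) ^ (-(a : ℝ) / (n - 1)) *
        |(a : ℝ) / n - 1| ^ (-((n : ℝ) - a) / (n - 1)))
    (hA4 : (3 : ℚ) / (n - 1) + (n : ℚ) * (padicValNat 2 n) / (n - 1) ≤ padicValRat 2 A)
    (hA5 : Nat.gcd A.num.natAbs n = 2 ^ padicValNat 2 n)
    (hA6 : Int.gcd (ratDenSigned A) ((a : ℤ) * ((a : ℤ) - n)) = 1)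
    (hA699 : ∃ p' : ℕ, p'.Prime ∧ n < p' ∧ padicValRat p' A = -1)
    (hA7 : Even n → (ratDenSigned A) % 8 ≠ 1 ∧ (ratDenSigned A) % 8 ≠ 7)
    (p : ℕ) [hp : Fact p.Prime] (k : ℕ) (hk : 0 < k)
    (hpdvd : ¬ (p : ℤ) ∣ ((n : ℤ) * ratDenSigned A * |A.num|))
    (hpos : 0 < padicValRat p ((fun x : ℚ => x ^ a * (x - A) ^ (n - a) + A)^[k] ((a : ℚ) * A / n)))
    (hodd : Odd (padicValRat p ((fun x : ℚ => x ^ a * (x - A) ^ (n - a) + A)^[k] ((a : ℚ) * A / n)))) :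
    ∃ g : Polynomial (ZMod p),
      polyIter (X ^ a * (X - C ((A.num : ZMod p) / (A.den : ZMod p))) ^ (n - a)
          + C ((A.num : ZMod p) / (A.den : ZMod p))) k
        = g * (X - C ((a : ZMod p) * ((A.num : ZMod p) / (A.den : ZMod p)) / (n : ZMod p))) ^ 2 ∧
      g.Separable ∧
      IsCoprime g ((X - C ((a : ZMod p) * ((A.num : ZMod p) / (A.den : ZMod p)) / (n : ZMod p))) ^ 2) :=
  iterate_mod_p_has_unique_double_root_general a n h0 han A p (hp := hp) k hk hpdvd hpos
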